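/- (Core of the main theorem, the r-spin Givental field.) Fix integers r ≥ 2 and d ≥ 1, and let V = H ⊗ ℚ^{r−1} carry the tensor-product bilinear form of g on H and the form g(e_a, e_b) = δ_{a+b,r} on ℚ^{r−1}. Then the operator of multiplication by (z^d/(d+1)!) · Id_H ⊗ diag[ B_{d+1}(1/r), …, B_{d+1}((r−1)/r) ] is an infinitesimal symplectic transformation of 𝒱 = V((z⁻¹)) with respect to Givental's form ω: denoting this operator by T, one has ω(Tf₁, f₂) + ω(f₁, Tf₂) = 0 for all f₁, f₂ ∈ 𝒱. -/

import Mathlib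

noncomputable section

open scoped TensorProduct

/-- `f : ℤ → V` has coefficients vanishing for all sufficiently large `k`
(finitely many positive powers of `z`). -/
def IsGivental {V : Type*} [AddCommGroup V] [Module ℚ V] (f : ℤ → V) : Prop :=
  ∃ N : ℤ, ∀ k : ℤ, N < k → f k = 0

/-- Givental's symplectic form `ω(f₁, f₂) = Σ_{k∈ℤ} (−1)^k g(f₁_k, f₂_{−1−k})`. -/
def giventalForm {V : Type*} [AddCommGroup V] [Module ℚ V]
    (g : V →ₗ[ℚ] V →ₗ[ℚ] ℚ) (f₁ f₂ : ℤ → V) : ℚ :=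
  ∑ᶠ k : ℤ, (-1 : ℚ) ^ k * g (f₁ k) (f₂ (-1 - k))

/-- The bilinear form on `ℚ^{r−1}` given by `g(e_a, e_b) = δ_{a+b,r}`, as a bilinear map
(the index `i : Fin (r-1)` corresponds to `m = i + 1`). -/
def spinPairing (r : ℕ) : (Fin (r - 1) → ℚ) →ₗ[ℚ] (Fin (r - 1) → ℚ) →ₗ[ℚ] ℚ :=
  Matrix.toLinearMap₂' ℚ
    (Matrix.of fun i j : Fin (r - 1) =>
      if (i : ℕ) + 1 + ((j : ℕ) + 1) = r then (1 : ℚ) else 0)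

/-- The diagonal operator `diag[B_{d+1}(1/r), …, B_{d+1}((r−1)/r)]` on `ℚ^{r−1}`. -/
def bernoulliDiag (r d : ℕ) : (Fin (r - 1) → ℚ) →ₗ[ℚ] (Fin (r - 1) → ℚ) :=
  LinearMap.pi fun i =>
    ((Polynomial.bernoulli (d + 1)).eval ((((i : ℕ) : ℚ) + 1) / r)) • LinearMap.proj i

/-- The operator of multiplication by
`(z^d/(d+1)!) · Id_H ⊗ diag[B_{d+1}(1/r), …, B_{d+1}((r−1)/r)]`
on `𝒱 = (H ⊗ ℚ^{r−1})((z⁻¹))`. -/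
def rspinField {H : Type*} [AddCommGroup H] [Module ℚ H] (r d : ℕ)
    (f : ℤ → H ⊗[ℚ] (Fin (r - 1) → ℚ)) : ℤ → H ⊗[ℚ] (Fin (r - 1) → ℚ) :=
  fun k => ((Nat.factorial (d + 1) : ℚ))⁻¹ •
    (TensorProduct.map LinearMap.id (bernoulliDiag r d)) (f (k - d))

/-!
Multiplication by `z^d` shifts Laurent coefficients by `d`, so after reindexing Givental's
form it contributes the sign `(-1)^d`. The coefficient matrix contributes `(-1)^(d+1)` when moved
to the other argument of the pairing, because `e_a` pairs only with `e_{r-a}` and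
`B_{d+1}(1 - t) = (-1)^(d+1) B_{d+1}(t)`. The two signs combine to `-1`.
-/

lemma spinPairing_bernoulliDiag_left (r d : ℕ) (x y : Fin (r - 1) → ℚ) :
    spinPairing r (bernoulliDiag r d x) y
      = (-1 : ℚ) ^ (d + 1) * spinPairing r x (bernoulliDiag r d y) := by
  simp only [spinPairing, Matrix.toLinearMap₂'_apply, bernoulliDiag, LinearMap.pi_apply,
    LinearMap.smul_apply, LinearMap.proj_apply, Matrix.of_apply, smul_eq_mul, Finset.mul_sum]
  refine Finset.sum_congr rfl fun i _ => Finset.sum_congr rfl fun j _ => ?_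
  split_ifs with h
  · have hsum : ((i : ℕ) : ℚ) + 1 + (((j : ℕ) : ℚ) + 1) = r := by exact_mod_cast h
    have hr : (r : ℚ) ≠ 0 := by rw [← hsum]; positivity
    have hreflect : (((i : ℕ) : ℚ) + 1) / r = 1 - (((j : ℕ) : ℚ) + 1) / r := by
      field_simp
      linarith
    rw [hreflect, Polynomial.bernoulli_eval_one_sub]
    ring
  · simp

attribute [local ext] TensorProduct.ext in
lemma LinearMap.BilinForm.tmul_map_id_apply_left {R M₁ M₂ : Type*} [CommSemiring R]
    [AddCommMonoid M₁] [Module R M₁] [AddCommMonoid M₂] [Module R M₂]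
    (B₁ : LinearMap.BilinForm R M₁) (B₂ : LinearMap.BilinForm R M₂) (A : M₂ →ₗ[R] M₂) (c : R)
    (hA : ∀ x y, B₂ (A x) y = c * B₂ x (A y)) (u v : M₁ ⊗[R] M₂) :
    B₁.tmul B₂ (TensorProduct.map LinearMap.id A u) v
      = c * B₁.tmul B₂ u (TensorProduct.map LinearMap.id A v) := by
  suffices h : (B₁.tmul B₂).compl₁₂ (TensorProduct.map LinearMap.id A) LinearMap.id
      = c • (B₁.tmul B₂).compl₂ (TensorProduct.map LinearMap.id A) from
    LinearMap.congr_fun₂ h u v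
  ext x₁ x₂ y₁ y₂
  simp [hA, mul_assoc]

lemma giventalForm_shift_add_shift_eq_zero {V : Type*} [AddCommGroup V] [Module ℚ V]
    (G : V →ₗ[ℚ] V →ₗ[ℚ] ℚ) (T : V →ₗ[ℚ] V) (d : ℕ)
    (hT : ∀ u v, G (T u) v = (-1 : ℚ) ^ (d + 1) * G u (T v)) (f₁ f₂ : ℤ → V) :
    giventalForm G (fun k => T (f₁ (k - d))) f₂
      + giventalForm G f₁ (fun k => T (f₂ (k - d))) = 0 := by
  suffices h : giventalForm G (fun k => T (f₁ (k - d))) f₂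
      = ∑ᶠ k : ℤ, -((-1 : ℚ) ^ k * G (f₁ k) (T (f₂ (-1 - k - d)))) by
    rw [h, giventalForm, finsum_neg_distrib, neg_add_cancel]
  rw [giventalForm, ← finsum_comp_equiv (Equiv.addRight (d : ℤ))]
  refine finsum_congr fun k => ?_
  have hsign : (-1 : ℚ) ^ (k + (d : ℤ)) * (-1) ^ (d + 1) = -(-1) ^ k := by
    rw [zpow_add₀ (by norm_num), zpow_natCast, mul_assoc, ← pow_add,
      show d + (d + 1) = 2 * d + 1 by ring, pow_succ, pow_mul]
    norm_num
  simp only [Equiv.coe_addRight, add_sub_cancel_right, show -1 - (k + (d : ℤ)) = -1 - k - d by ring,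
    hT, ← mul_assoc, hsign, neg_mul]

theorem rspinField_infinitesimally_symplectic_general {H : Type*} [AddCommGroup H] [Module ℚ H]
    (g : H →ₗ[ℚ] H →ₗ[ℚ] ℚ)
    (r d : ℕ)
    (f₁ f₂ : ℤ → H ⊗[ℚ] (Fin (r - 1) → ℚ)) :
    giventalForm (LinearMap.BilinForm.tmul g (spinPairing r)) (rspinField r d f₁) f₂ +
      giventalForm (LinearMap.BilinForm.tmul g (spinPairing r)) f₁ (rspinField r d f₂) = 0 := by
  set T := ((d + 1).factorial : ℚ)⁻¹ • TensorProduct.map (LinearMap.id : H →ₗ[ℚ] H)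
    (bernoulliDiag r d) with hT
  have hTsign (u v) : LinearMap.BilinForm.tmul g (spinPairing r) (T u) v
      = (-1 : ℚ) ^ (d + 1) * LinearMap.BilinForm.tmul g (spinPairing r) u (T v) := by
    simp only [hT, LinearMap.smul_apply, map_smul, smul_eq_mul,
      LinearMap.BilinForm.tmul_map_id_apply_left g _ _ _ (spinPairing_bernoulliDiag_left r d)]
    ring
  exact giventalForm_shift_add_shift_eq_zero _ T d hTsign f₁ f₂

/-- The r-spin Givental field is an infinitesimal symplectic transformation of
`𝒱 = (H ⊗ ℚ^{r−1})((z⁻¹))` with respect to Givental's form built from the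
tensor-product bilinear form. -/
theorem rspinField_infinitesimally_symplectic {H : Type*} [AddCommGroup H] [Module ℚ H]
    [FiniteDimensional ℚ H]
    (g : H →ₗ[ℚ] H →ₗ[ℚ] ℚ)
    (hsymm : ∀ u v : H, g u v = g v u)
    (hnondeg : ∀ u : H, (∀ v : H, g u v = 0) → u = 0)
    (r d : ℕ) (hr : 2 ≤ r) (hd : 1 ≤ d)
    (f₁ f₂ : ℤ → H ⊗[ℚ] (Fin (r - 1) → ℚ))
    (hf₁ : IsGivental f₁) (hf₂ : IsGivental f₂) :
    giventalForm (LinearMap.BilinForm.tmul g (spinPairing r)) (rspinField r d f₁) f₂ +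
      giventalForm (LinearMap.BilinForm.tmul g (spinPairing r)) f₁ (rspinField r d f₂) = 0 :=
  rspinField_infinitesimally_symplectic_general g r d f₁ f₂
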